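/- arXiv:math/0207203 — 3 statements merged into one kernel-verified Lean document; each statement's English description precedes it below -/
import Mathlib

section
/- Let p, q be coprime positive integers with p > q, and let q/p = [a_0, a_1, ..., a_n] be its continued fraction expansion with a_0 ≥ 0, a_i > 0, a_n > 1. If n is odd, then (pq+1)/p^2 = [a_0, a_1, ..., a_{n-1}, a_n-1, a_n+1, a_{n-1}, ..., a_2, a_1]; if n is even, then (pq+1)/p^2 = [a_0, a_1, ..., a_{n-1}, a_n+1, a_n-1, a_{n-1}, ..., a_2, a_1]. -/
/-- Continued fraction value: `cf [a₀, a₁, ..., aₙ] = a₀ + 1/(a₁ + 1/(... + 1/aₙ))`. -/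
def cf : List ℤ → ℚ
  | [] => 0
  | [a] => (a : ℚ)
  | a :: l => (a : ℚ) + (cf l)⁻¹

/-- Auxiliary for the Bredon–Wood sum: carries previous `a`, previous `b`,
and the partial sum of the `b`'s. -/
def NsumAux : ℤ → ℤ → ℤ → List ℤ → ℤ
  | _, _, s, [] => s
  | pa, pb, s, a :: l =>
      NsumAux a (if pb = pa ∧ Even s then 0 else a)
        (s + (if pb = pa ∧ Even s then 0 else a)) l

/-- `Nsum [a₀,...,aₙ] = b₀ + ... + bₙ` where `b₀ = a₀` and
`bᵢ = 0` if `bᵢ₋₁ = aᵢ₋₁` and `b₀ + ... + bᵢ₋₁` is even, else `bᵢ = aᵢ`.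
The Bredon–Wood invariant is `N(x,y) = Nsum l / 2` for `l` the continued
fraction expansion of `x/y`. -/
def Nsum : List ℤ → ℤ
  | [] => 0
  | a :: l => NsumAux a a a l

/-- A valid continued fraction expansion: nonempty, `a₀ ≥ 0`,
`aᵢ > 0` for `i ≥ 1`, and the last term `> 1`. -/
def ValidCF (l : List ℤ) : Prop :=
  l ≠ [] ∧ 0 ≤ l.headI ∧ (∀ a ∈ l.tail, 0 < a) ∧ 1 < l.getLast!

/-!
With `K b = !![b, 1; 1, 0]`, the product `M = K a₀ ⋯ K aₖ` has first column
(numerator, denominator) of `[a₀, …, aₖ]` and determinant `(-1)^(k+1)`, so this column is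
coprime and `q/p = [a₀, …, aₙ]` forces it to be `(q, p)`. Transposition reverses products,
so for `ε = (-1)^(n-1)` the new expansion has matrix `M' K(aₙ - ε) K(aₙ + ε) M''ᵀ`, where
`M'`, `M''` belong to `[a₀, …, aₙ₋₁]` and `[a₁, …, aₙ₋₁]`; the second row of `M'` is the
first row of `M''`.
Expanding the first column with `det M' = -ε` gives `(pq + 1, p²)`.
-/

open Matrix

def cfMatrix (l : List ℤ) : Matrix (Fin 2) (Fin 2) ℤ :=
  (l.map fun a => !![a, 1; 1, 0]).prod

@[simp]
lemma cfMatrix_nil : cfMatrix [] = 1 := rfl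

@[simp]
lemma cfMatrix_cons (a : ℤ) (l : List ℤ) : cfMatrix (a :: l) = !![a, 1; 1, 0] * cfMatrix l := by
  simp [cfMatrix]

@[simp]
lemma cfMatrix_append (l m : List ℤ) : cfMatrix (l ++ m) = cfMatrix l * cfMatrix m := by
  simp [cfMatrix]

lemma cfMatrix_reverse (l : List ℤ) : cfMatrix l.reverse = (cfMatrix l)ᵀ := by
  induction l with
  | nil => simp
  | cons a l ih =>
    have hsymm : (!![a, 1; 1, 0] : Matrix (Fin 2) (Fin 2) ℤ)ᵀ = !![a, 1; 1, 0] := by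
      ext i j; fin_cases i <;> fin_cases j <;> rfl
    rw [List.reverse_cons, cfMatrix_append, ih, cfMatrix_cons, cfMatrix_cons, cfMatrix_nil, mul_one,
      transpose_mul, hsymm]

lemma det_cfMatrix (l : List ℤ) : (cfMatrix l).det = (-1) ^ l.length := by
  induction l with
  | nil => simp
  | cons a l ih =>
    rw [cfMatrix_cons, det_mul, ih, det_fin_two_of, List.length_cons, pow_succ]
    ring

lemma cfMatrix_cons_apply_zero_zero (a : ℤ) (l : List ℤ) :
    cfMatrix (a :: l) 0 0 = a * cfMatrix l 0 0 + cfMatrix l 1 0 := by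
  simp [mul_apply, Fin.sum_univ_two]

lemma cfMatrix_cons_apply_one (a : ℤ) (l : List ℤ) (j : Fin 2) :
    cfMatrix (a :: l) 1 j = cfMatrix l 0 j := by
  simp [mul_apply, Fin.sum_univ_two]

lemma cfMatrix_col_pos {l : List ℤ} (hl : ∀ a ∈ l, 0 < a) :
    0 < cfMatrix l 0 0 ∧ 0 ≤ cfMatrix l 1 0 := by
  induction l with
  | nil => simp
  | cons a l ih =>
    obtain ⟨h₀, h₁⟩ := ih fun x hx => hl x (List.mem_cons_of_mem _ hx)
    have ha : 0 < a := hl a List.mem_cons_self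
    rw [cfMatrix_cons_apply_zero_zero, cfMatrix_cons_apply_one]
    exact ⟨by positivity, h₀.le⟩

lemma cf_eq_cfMatrix_div {l : List ℤ} (hl : ∀ a ∈ l.tail, 0 < a) :
    cf l = (cfMatrix l 0 0 : ℚ) / cfMatrix l 1 0 := by
  induction l with
  | nil => simp [cf]
  | cons a l ih =>
    cases l with
    | nil => simp [cf]
    | cons b m =>
      have hpos : ∀ x ∈ b :: m, 0 < x := by simpa using hl
      have hden : (cfMatrix (b :: m) 0 0 : ℚ) ≠ 0 := by
        exact_mod_cast (cfMatrix_col_pos hpos).1.ne'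
      show (a : ℚ) + (cf (b :: m))⁻¹ = _
      rw [ih fun x hx => hpos x (List.mem_of_mem_tail hx), inv_div,
        cfMatrix_cons_apply_zero_zero a, cfMatrix_cons_apply_one a]
      push_cast
      field_simp

lemma isCoprime_cfMatrix_col (l : List ℤ) : IsCoprime (cfMatrix l 0 0) (cfMatrix l 1 0) := by
  have hdet := det_cfMatrix l
  rw [det_fin_two] at hdet
  rcases neg_one_pow_eq_or ℤ l.length with h | h
  · exact ⟨cfMatrix l 1 1, -cfMatrix l 0 1, by linarith⟩
  · exact ⟨-cfMatrix l 1 1, cfMatrix l 0 1, by linarith⟩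

lemma cfMatrix_col_eq_of_cf_eq {l : List ℤ} (hl : l ≠ []) (htail : ∀ a ∈ l.tail, 0 < a)
    {q p : ℤ} (hp : 0 < p) (hqp : IsCoprime q p) (hcf : cf l = (q : ℚ) / p) :
    cfMatrix l 0 0 = q ∧ cfMatrix l 1 0 = p := by
  have hden : 0 < cfMatrix l 1 0 := by
    obtain ⟨a₀, T, rfl⟩ := List.exists_cons_of_ne_nil hl
    rw [cfMatrix_cons_apply_one]
    exact (cfMatrix_col_pos htail).1
  have hM := Int.isCoprime_iff_gcd_eq_one.mp (isCoprime_cfMatrix_col l)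
  have hqp' := Int.isCoprime_iff_gcd_eq_one.mp hqp
  rw [cf_eq_cfMatrix_div htail] at hcf
  constructor
  · rw [← Rat.num_div_eq_of_coprime hden hM, hcf, Rat.num_div_eq_of_coprime hp hqp']
  · rw [← Rat.den_div_eq_of_coprime hden hM, hcf, Rat.den_div_eq_of_coprime hp hqp']

lemma cfMatrix_crosscap (a₀ x : ℤ) (T : List ℤ) {ε : ℤ} (hε : ε = (-1) ^ T.length) :
    cfMatrix (a₀ :: T ++ [x - ε, x + ε] ++ T.reverse) 0 0 =
        cfMatrix (a₀ :: T ++ [x]) 0 0 * cfMatrix (a₀ :: T ++ [x]) 1 0 + 1 ∧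
      cfMatrix (a₀ :: T ++ [x - ε, x + ε] ++ T.reverse) 1 0 =
        cfMatrix (a₀ :: T ++ [x]) 1 0 ^ 2 := by
  have hdet := det_cfMatrix (a₀ :: T)
  rw [det_fin_two, List.length_cons, pow_succ, ← hε] at hdet
  have hε2 : ε ^ 2 = 1 := by rw [hε, ← pow_mul, mul_comm, pow_mul, neg_one_sq, one_pow]
  have hrow := cfMatrix_cons_apply_one a₀ T
  simp only [cfMatrix_append, cfMatrix_reverse, cfMatrix_cons, cfMatrix_nil, mul_one]
  simp only [← cfMatrix_cons] at hdet hrow ⊢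
  set M := cfMatrix (a₀ :: T)
  constructor <;>
    simp only [mul_apply, Fin.sum_univ_two, transpose_apply, ← hrow, of_apply, cons_val',
      cons_val_zero, cons_val_one, empty_val', cons_val_fin_one]
  · linear_combination (-ε) * hdet + (1 - M 0 0 * M 1 0) * hε2
  · linear_combination (-M 1 0 ^ 2) * hε2

lemma cf_crosscap {a₀ x : ℤ} {T : List ℤ} (hT : ∀ a ∈ T, 0 < a) (hx : 1 < x) {ε : ℤ}
    (hε : ε = (-1) ^ T.length) {q p : ℤ} (hp : 0 < p) (hqp : IsCoprime q p)
    (hcf : cf (a₀ :: T ++ [x]) = (q : ℚ) / p) :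
    cf (a₀ :: T ++ [x - ε, x + ε] ++ T.reverse) = ((p : ℚ) * q + 1) / p ^ 2 := by
  have hpos : ∀ a ∈ T ++ [x], 0 < a := by
    simp only [List.mem_append, List.mem_singleton]
    rintro a (ha | rfl)
    exacts [hT a ha, by omega]
  obtain ⟨hq₀, hp₀⟩ := cfMatrix_col_eq_of_cf_eq (l := a₀ :: T ++ [x]) (by simp) hpos hp hqp hcf
  obtain ⟨h₀, h₁⟩ := cfMatrix_crosscap a₀ x T hε
  have hε1 : ε = 1 ∨ ε = -1 := hε ▸ neg_one_pow_eq_or ℤ _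
  have htail : ∀ a ∈ (a₀ :: T ++ [x - ε, x + ε] ++ T.reverse).tail, 0 < a := by
    simp only [List.cons_append, List.tail_cons, List.mem_append, List.mem_cons, List.mem_reverse,
      List.not_mem_nil, or_false]
    rintro a ((ha | rfl | rfl) | ha) <;> first | exact hT a ha | omega
  rw [cf_eq_cfMatrix_div htail, h₀, h₁, hq₀, hp₀]
  push_cast
  ring

theorem crosscap_stmt2_general (p q n : ℕ) (a : ℕ → ℤ) (hq : 0 < q) (hqp : q < p)
    (hcop : Nat.Coprime p q)
    (hpos : ∀ i, 1 ≤ i → i ≤ n → 0 < a i) (hlast : 1 < a n)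
    (hcf : cf (List.ofFn fun i : Fin (n+1) => a i) = (q : ℚ) / p) :
    (Odd n → cf ((List.ofFn fun i : Fin n => a i) ++ [a n - 1, a n + 1] ++
        (List.ofFn fun i : Fin (n-1) => a (i+1)).reverse) = ((p:ℚ)*q + 1) / (p:ℚ)^2) ∧
    (Even n → cf ((List.ofFn fun i : Fin n => a i) ++ [a n + 1, a n - 1] ++
        (List.ofFn fun i : Fin (n-1) => a (i+1)).reverse) = ((p:ℚ)*q + 1) / (p:ℚ)^2) := by
  have hp : (0 : ℤ) < p := by omega
  have hqp' : IsCoprime (q : ℤ) p := Nat.isCoprime_iff_coprime.mpr hcop.symm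
  obtain _ | m := n
  · have hp₁ : 1 = (p : ℤ) := by
      simpa using (cfMatrix_col_eq_of_cf_eq (by simp) (by simp) hp hqp' hcf).2
    omega
  set T := List.ofFn fun i : Fin m => a (i + 1)
  have hT : ∀ y ∈ T, 0 < y := by
    simp only [T, List.mem_ofFn, forall_exists_index]
    rintro _ i rfl
    exact hpos _ (by omega) (by omega)
  have hinit : (List.ofFn fun i : Fin (m + 1) => a i) = a 0 :: T := by simp [List.ofFn_succ, T]
  have hsplit : (List.ofFn fun i : Fin (m + 2) => a i) = a 0 :: T ++ [a (m + 1)] := by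
    rw [← hinit, List.ofFn_succ', List.concat_eq_append]
    rfl
  rw [hsplit] at hcf
  have key (ε : ℤ) (hε : ε = (-1) ^ m) :=
    cf_crosscap hT hlast (by simpa [T] using hε) hp hqp' hcf
  refine ⟨fun hodd => ?_, fun heven => ?_⟩
  · rw [hinit]
    exact key 1 (Nat.not_odd_iff_even.mp (Nat.odd_add_one.mp hodd)).neg_one_pow.symm
  · rw [hinit]
    have := key (-1) (Nat.not_even_iff_odd.mp (Nat.even_add_one.mp heven)).neg_one_pow.symm
    rwa [sub_neg_eq_add, ← sub_eq_add_neg] at this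

theorem crosscap_stmt2 (p q n : ℕ) (a : ℕ → ℤ) (hq : 0 < q) (hqp : q < p)
    (hcop : Nat.Coprime p q) (h0 : 0 ≤ a 0)
    (hpos : ∀ i, 1 ≤ i → i ≤ n → 0 < a i) (hlast : 1 < a n)
    (hcf : cf (List.ofFn fun i : Fin (n+1) => a i) = (q : ℚ) / p) :
    (Odd n → cf ((List.ofFn fun i : Fin n => a i) ++ [a n - 1, a n + 1] ++
        (List.ofFn fun i : Fin (n-1) => a (i+1)).reverse) = ((p:ℚ)*q + 1) / (p:ℚ)^2) ∧
    (Even n → cf ((List.ofFn fun i : Fin n => a i) ++ [a n + 1, a n - 1] ++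
        (List.ofFn fun i : Fin (n-1) => a (i+1)).reverse) = ((p:ℚ)*q + 1) / (p:ℚ)^2) :=
  crosscap_stmt2_general p q n a hq hqp hcop hpos hlast hcf
end

section
/- With N(x,y) the Bredon–Wood invariant defined via continued fractions, for coprime odd positive integers p > q > 1: if (p,q) is of type B (the unique solution x of xq ≡ -1 mod p with 0 < x < p is odd), then N(pq+1, p^2) + 1 = N(pq-1, p^2). -/
/-! ### 2×2 integer matrices as nested pairs -/

abbrev M2 : Type := (ℤ × ℤ) × (ℤ × ℤ)

def m2mul (A B : M2) : M2 :=
  ((A.1.1*B.1.1 + A.1.2*B.2.1, A.1.1*B.1.2 + A.1.2*B.2.2),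
   (A.2.1*B.1.1 + A.2.2*B.2.1, A.2.1*B.1.2 + A.2.2*B.2.2))

def m2T (A : M2) : M2 := ((A.1.1, A.2.1), (A.1.2, A.2.2))

def m2det (A : M2) : ℤ := A.1.1 * A.2.2 - A.1.2 * A.2.1

def Km : List ℤ → M2
  | [] => ((1,0),(0,1))
  | a :: l => m2mul ((a,1),(1,0)) (Km l)

lemma m2mul_assoc (A B C : M2) : m2mul (m2mul A B) C = m2mul A (m2mul B C) := by
  simp only [m2mul, Prod.mk.injEq]
  exact ⟨⟨by ring, by ring⟩, by ring, by ring⟩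

lemma Km_append (l m : List ℤ) : Km (l ++ m) = m2mul (Km l) (Km m) := by
  induction l with
  | nil => simp [Km, m2mul]
  | cons a l ih =>
      rw [List.cons_append, show Km (a :: (l ++ m)) = m2mul ((a,1),(1,0)) (Km (l ++ m)) from rfl,
        ih, show Km (a :: l) = m2mul ((a,1),(1,0)) (Km l) from rfl, m2mul_assoc]

lemma m2T_mul (A B : M2) : m2T (m2mul A B) = m2mul (m2T B) (m2T A) := by
  simp only [m2T, m2mul, Prod.mk.injEq]
  exact ⟨⟨by ring, by ring⟩, by ring, by ring⟩

lemma Km_reverse (l : List ℤ) : Km l.reverse = m2T (Km l) := by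
  induction l with
  | nil => simp [Km, m2T]
  | cons a l ih =>
      rw [List.reverse_cons, Km_append, ih, show Km (a :: l) = m2mul ((a,1),(1,0)) (Km l) from rfl,
        m2T_mul]
      congr 1
      simp only [Km, m2T, m2mul, Prod.mk.injEq]
      exact ⟨⟨by ring, by ring⟩, by ring, by ring⟩

lemma Km_det (l : List ℤ) : m2det (Km l) = 1 ∨ m2det (Km l) = -1 := by
  induction l with
  | nil => left; rfl
  | cons a l ih =>
      rcases ih with h | h <;> [right; left] <;>
        · simp only [Km, m2det, m2mul] at *
          nlinarith [h]

lemma Km_pos (l : List ℤ) (hl : ∀ a ∈ l, 0 < a) :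
    1 ≤ (Km l).1.1 ∧ 0 ≤ (Km l).1.2 ∧ 0 ≤ (Km l).2.1 ∧ 0 ≤ (Km l).2.2 := by
  induction l with
  | nil => norm_num [Km]
  | cons a l ih =>
      have ha : 0 < a := hl a (by simp)
      have ih' := ih (fun x hx => hl x (by simp [hx]))
      simp only [Km, m2mul]
      obtain ⟨h1, h2, h3, h4⟩ := ih'
      refine ⟨by nlinarith, by nlinarith, by nlinarith, by nlinarith⟩

/-! ### cf lemmas -/

lemma cf_cons (a : ℤ) (l : List ℤ) (h : l ≠ []) : cf (a :: l) = (a:ℚ) + (cf l)⁻¹ := by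
  cases l with
  | nil => simp at h
  | cons b t => rfl

lemma cf_eq_Km (l : List ℤ) (hne : l ≠ []) (hl : ∀ a ∈ l, 0 < a) :
    1 ≤ cf l ∧ cf l = ((Km l).1.1 : ℚ) / ((Km l).2.1 : ℚ) := by
  induction l with
  | nil => simp at hne
  | cons a t ih =>
      have ha : 0 < a := hl a (by simp)
      cases t with
      | nil =>
          constructor
          · show (1:ℚ) ≤ (a:ℚ); exact_mod_cast ha
          · show (a:ℚ) = _
            norm_num [Km, m2mul]
      | cons b t' =>
          have ht : (b :: t') ≠ [] := by simp
          obtain ⟨h1, h2⟩ := ih ht (fun x hx => hl x (by simp [List.mem_cons] at hx ⊢; tauto))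
          have hpos := Km_pos (b :: t') (fun x hx => hl x (by simp [List.mem_cons] at hx ⊢; tauto))
          set K00 := (Km (b :: t')).1.1 with hK00
          set K10 := (Km (b :: t')).2.1 with hK10
          have hK00pos : (0:ℚ) < (K00 : ℚ) := by exact_mod_cast lt_of_lt_of_le zero_lt_one hpos.1
          have hcf : cf (a :: b :: t') = (a:ℚ) + (cf (b::t'))⁻¹ := rfl
          have hinv : (cf (b::t'))⁻¹ = (K10 : ℚ) / (K00 : ℚ) := by rw [h2, inv_div]
          have hcfl : cf (a :: b :: t') = ((a * K00 + K10 : ℤ) : ℚ) / (K00 : ℚ) := by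
            rw [hcf, hinv]
            push_cast
            field_simp
          constructor
          · rw [hcf, hinv]
            have h10 : (0:ℚ) ≤ (K10:ℚ) := by exact_mod_cast hpos.2.2.1
            have : (0:ℚ) ≤ (K10:ℚ)/(K00:ℚ) := div_nonneg h10 hK00pos.le
            have : (1:ℚ) ≤ (a:ℚ) := by exact_mod_cast ha
            linarith
          · rw [hcfl]
            have e1 : (Km (a :: b :: t')).1.1 = a * K00 + K10 := by
              rw [show Km (a :: b :: t') = m2mul ((a,1),(1,0)) (Km (b :: t')) from rfl]
              simp [m2mul, ← hK00, ← hK10]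
            have e2 : (Km (a :: b :: t')).2.1 = K00 := by
              rw [show Km (a :: b :: t') = m2mul ((a,1),(1,0)) (Km (b :: t')) from rfl]
              simp [m2mul, ← hK00]
            rw [e1, e2]

lemma getLast!_cons_ne (a : ℤ) (t : List ℤ) (h : t ≠ []) : (a :: t).getLast! = t.getLast! := by
  cases t with
  | nil => simp at h
  | cons b u =>
      rw [List.getLast!_of_getLast? (l := a :: b :: u) (a := (b::u).getLast (by simp)),
        List.getLast!_of_getLast? (l := b :: u) (a := (b::u).getLast (by simp))]
      · rw [List.getLast?_eq_getLast (by simp)]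
      · rw [List.getLast?_eq_getLast (by simp)]
        simp [List.getLast_cons]

lemma one_lt_cf (l : List ℤ) (hne : l ≠ []) (hl : ∀ a ∈ l, 0 < a) (hlast : 1 < l.getLast!) :
    1 < cf l := by
  induction l with
  | nil => simp at hne
  | cons a t ih =>
      cases t with
      | nil =>
          have : (1:ℤ) < a := by
            simpa [List.getLast!_of_getLast? (l := [a]) (a := a) (by simp)] using hlast
          show (1:ℚ) < (a:ℚ)
          exact_mod_cast this
      | cons b u =>
          have ht : (b :: u) ≠ [] := by simp
          have h1 : 1 < cf (b :: u) := by
            refine ih ht (fun x hx => hl x (by simp [List.mem_cons] at hx ⊢; tauto)) ?_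
            rwa [getLast!_cons_ne a _ ht] at hlast
          have ha : (1:ℚ) ≤ (a:ℚ) := by exact_mod_cast hl a (by simp)
          have hinv : 0 < (cf (b :: u))⁻¹ := by positivity
          rw [cf_cons a _ ht]
          linarith

lemma valid_tail (a : ℤ) (t : List ℤ) (ht : t ≠ []) (h : ValidCF (a :: t)) : ValidCF t := by
  obtain ⟨-, -, h3, h4⟩ := h
  refine ⟨ht, ?_, ?_, ?_⟩
  · cases t with
    | nil => simp at ht
    | cons b u => exact le_of_lt (h3 b (by simp))
  · intro x hx
    cases t with
    | nil => simp at ht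
    | cons b u => exact h3 x (by simp [List.mem_cons] at hx ⊢; tauto)
  · rwa [getLast!_cons_ne a t ht] at h4

lemma cf_frac (a : ℤ) (t : List ℤ) (ht : t ≠ []) (h : ValidCF (a :: t)) :
    0 < (cf t)⁻¹ ∧ (cf t)⁻¹ < 1 := by
  have hv := valid_tail a t ht h
  have h1 : 1 < cf t := one_lt_cf t ht (fun x hx => by
    obtain ⟨-, -, h3, -⟩ := h; exact h3 x hx) hv.2.2.2
  constructor
  · positivity
  · rw [inv_lt_one_iff₀]; right; exact h1

lemma cf_unique (l : List ℤ) : ∀ (l' : List ℤ), ValidCF l → ValidCF l' → cf l = cf l' → l = l' := by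
  induction l with
  | nil => intro l' h _ _; exact absurd rfl h.1
  | cons a t ih =>
      intro l' h h' hcf
      cases l' with
      | nil => exact absurd rfl h'.1
      | cons a' t' =>
          cases t with
          | nil =>
              cases t' with
              | nil =>
                  have : (a:ℚ) = (a':ℚ) := hcf
                  have : a = a' := by exact_mod_cast this
                  rw [this]
              | cons b' u' =>
                  exfalso
                  have h2 := cf_frac a' _ (by simp) h'
                  rw [cf_cons a' _ (by simp)] at hcf
                  have : (a:ℚ) = a' + (cf (b'::u'))⁻¹ := hcf
                  have hi1 : ((a - a' : ℤ):ℚ) = (cf (b'::u'))⁻¹ := by push_cast; linarith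
                  have : (0:ℚ) < ((a - a' : ℤ):ℚ) := by rw [hi1]; exact h2.1
                  have : ((a - a' : ℤ):ℚ) < 1 := by rw [hi1]; exact h2.2
                  have h01 : (0:ℤ) < a - a' := by exact_mod_cast ‹(0:ℚ) < ((a - a' : ℤ):ℚ)›
                  have h02 : (a - a' : ℤ) < 1 := by exact_mod_cast ‹((a - a' : ℤ):ℚ) < 1›
                  omega
          | cons b u =>
              cases t' with
              | nil =>
                  exfalso
                  have h2 := cf_frac a _ (by simp) h
                  rw [cf_cons a _ (by simp)] at hcf
                  have : a + (cf (b::u))⁻¹ = (a':ℚ) := hcf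
                  have hi1 : ((a' - a : ℤ):ℚ) = (cf (b::u))⁻¹ := by push_cast; linarith
                  have : (0:ℚ) < ((a' - a : ℤ):ℚ) := by rw [hi1]; exact h2.1
                  have : ((a' - a : ℤ):ℚ) < 1 := by rw [hi1]; exact h2.2
                  have h01 : (0:ℤ) < a' - a := by exact_mod_cast ‹(0:ℚ) < ((a' - a : ℤ):ℚ)›
                  have h02 : (a' - a : ℤ) < 1 := by exact_mod_cast ‹((a' - a : ℤ):ℚ) < 1›
                  omega
              | cons b' u' =>
                  have h2 := cf_frac a _ (by simp) h
                  have h2' := cf_frac a' _ (by simp) h'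
                  rw [cf_cons a _ (by simp), cf_cons a' _ (by simp)] at hcf
                  have haa : a = a' := by
                    have : ((a - a' : ℤ):ℚ) = (cf (b'::u'))⁻¹ - (cf (b::u))⁻¹ := by
                      push_cast; linarith
                    have hlt1 : ((a - a' : ℤ):ℚ) < 1 := by rw [this]; linarith [h2'.2, h2.1]
                    have hgt1 : (-1:ℚ) < ((a - a' : ℤ):ℚ) := by rw [this]; linarith [h2.2, h2'.1]
                    have e1 : (a - a' : ℤ) < 1 := by exact_mod_cast hlt1
                    have e2 : (-1:ℤ) < a - a' := by exact_mod_cast hgt1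
                    omega
                  subst haa
                  have : (cf (b::u))⁻¹ = (cf (b'::u'))⁻¹ := by linarith
                  have hcfeq : cf (b::u) = cf (b'::u') := by
                    have hne1 : cf (b::u) ≠ 0 := by
                      intro hz; rw [hz] at h2; simp at h2
                    have hne2 : cf (b'::u') ≠ 0 := by
                      intro hz; rw [hz] at h2'; simp at h2'
                    exact inv_injective this
                  have := ih (b'::u') (valid_tail a _ (by simp) h) (valid_tail a _ (by simp) h') hcfeq
                  rw [this]

/-! ### Nsum automaton -/

def runS : List ℤ → ℤ × ℤ × ℤ → ℤ × ℤ × ℤ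
  | [], st => st
  | a :: l, (pa, pb, s) =>
      runS l (a, (if pb = pa ∧ Even s then 0 else a), s + (if pb = pa ∧ Even s then 0 else a))

lemma NsumAux_eq_runS (l : List ℤ) : ∀ pa pb s, NsumAux pa pb s l = (runS l (pa, pb, s)).2.2 := by
  induction l with
  | nil => intro pa pb s; rfl
  | cons a t ih => intro pa pb s; rw [NsumAux, runS, ih]

lemma runS_append (l m : List ℤ) : ∀ st, runS (l ++ m) st = runS m (runS l st) := by
  induction l with
  | nil => intro st; rfl
  | cons a t ih =>
      intro ⟨pa, pb, s⟩
      rw [List.cons_append, runS, runS, ih]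

lemma runS_congr (R : List ℤ) (hR : ∀ a ∈ R, 0 < a) : ∀ pa pb s pa' pb' s',
    ((pb = pa) ↔ (pb' = pa')) → (Even s ↔ Even s') →
    (runS R (pa, pb, s)).2.2 - s = (runS R (pa', pb', s')).2.2 - s' := by
  induction R with
  | nil => intro pa pb s pa' pb' s' _ hs; simp [runS]
  | cons a t ih =>
      intro pa pb s pa' pb' s' hz hs
      have ha : 0 < a := hR a (by simp)
      have ht : ∀ x ∈ t, 0 < x := fun x hx => hR x (by simp [hx])
      by_cases h : pb = pa ∧ Even s
      · have h' : pb' = pa' ∧ Even s' := ⟨hz.1 h.1, hs.1 h.2⟩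
        rw [runS, if_pos h, runS, if_pos h']
        have := ih ht a 0 (s+0) a 0 (s'+0) Iff.rfl (by simpa using hs)
        omega
      · have h' : ¬ (pb' = pa' ∧ Even s') := by
          intro hc; exact h ⟨hz.2 hc.1, hs.2 hc.2⟩
        rw [runS, if_neg h, runS, if_neg h']
        have := ih ht a a (s+a) a a (s'+a) Iff.rfl (by
          constructor
          · intro hh
            have := Int.even_add.mp hh
            exact Int.even_add.mpr (by tauto)
          · intro hh
            have := Int.even_add.mp hh
            exact Int.even_add.mpr (by tauto))
        omega

lemma runS_ge (R : List ℤ) (hR : ∀ a ∈ R, 0 < a) : ∀ pa pb s, s ≤ (runS R (pa, pb, s)).2.2 := by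
  induction R with
  | nil => intro _ _ _; exact le_refl _
  | cons a t ih =>
      intro pa pb s
      have ha : 0 < a := hR a (by simp)
      have ht : ∀ x ∈ t, 0 < x := fun x hx => hR x (by simp [hx])
      rw [runS]
      have := ih ht a (if pb = pa ∧ Even s then 0 else a) (s + (if pb = pa ∧ Even s then 0 else a))
      split_ifs at this ⊢ <;> omega

/-- The key invariant: the automaton state after processing `I` (started from `(0,0,0)`,
i.e. after the leading `0` term) is determined by `Km I mod 2`. -/
lemma state_inv (I : List ℤ) (hI : ∀ a ∈ I, 0 < a) :
    (¬ Even (Km I).2.2 →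
      ((runS I (0,0,0)).2.1 = (runS I (0,0,0)).1 ∧
        (Even ((runS I (0,0,0)).2.2) ↔ Even (Km I).2.1)))
  ∧ (Even (Km I).2.2 →
      ((runS I (0,0,0)).2.1 ≠ (runS I (0,0,0)).1 ∧ Even ((runS I (0,0,0)).2.2))) := by
  induction I using List.reverseRecOn with
  | nil =>
      constructor
      · intro _
        constructor
        · rfl
        · simp [Km, runS]
      · intro h
        exfalso
        simp [Km] at h
  | append_singleton I a ih =>
      have hIa : ∀ x ∈ I, 0 < x := fun x hx => hI x (by simp [hx])
      have ha : 0 < a := hI a (by simp)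
      have ih' := ih hIa
      have hdet := Km_det I
      rcases hst : runS I (0,0,0) with ⟨pa, pb, s⟩
      rcases hKI : Km I with ⟨⟨r, s'⟩, t, u⟩
      rw [hst, hKI] at ih'
      rw [hKI] at hdet
      simp only [m2det] at hdet
      have hodd : ¬ Even (r * u - s' * t) := by
        rcases hdet with h | h <;> rw [h] <;> decide
      rw [runS_append, hst, Km_append, hKI,
        show Km [a] = (((a:ℤ),(1:ℤ)),((1:ℤ),(0:ℤ))) by norm_num [Km, m2mul]]
      simp only [runS, m2mul]
      simp only [mul_one, mul_zero, add_zero] at *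
      by_cases hc : pb = pa ∧ Even s
      · have hu : ¬ Even u := by
          intro he
          exact (ih'.2 he).1 hc.1
        have hts : Even s ↔ Even t := (ih'.1 hu).2
        have het : Even t := hts.mp hc.2
        rw [if_pos hc]
        constructor
        · intro hne
          exact absurd het hne
        · intro _
          exact ⟨ne_of_lt ha, by simpa using hc.2⟩
      · rw [if_neg hc]
        by_cases hu : Even u
        · have h2 := ih'.2 hu
          have ht : ¬ Even t := by
            intro het
            apply hodd
            rw [Int.even_sub]
            simp only [Int.even_mul]
            tauto
          constructor
          · intro _
            refine ⟨rfl, ?_⟩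
            have hs2 : Even s := h2.2
            have hta : Even (t * a) ↔ Even t ∨ Even a := Int.even_mul
            generalize hw : t * a = w at hta ⊢
            simp only [Int.even_iff] at hta hu ht hs2 ⊢
            omega
          · intro het
            exact absurd het ht
        · have h1 := ih'.1 hu
          have hs : ¬ Even s := fun hes => hc ⟨h1.1, hes⟩
          have ht : ¬ Even t := fun het => hs (h1.2.mpr het)
          constructor
          · intro _
            refine ⟨rfl, ?_⟩
            have hta : Even (t * a) ↔ Even t ∨ Even a := Int.even_mul
            generalize hw : t * a = w at hta ⊢
            simp only [Int.even_iff] at hta hu ht hs ⊢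
            omega
          · intro het
            exact absurd het ht

/-! ### Euclidean continued fraction of p/q -/

def build (p q : ℕ) : List ℤ :=
  if h : q = 0 then []
  else if q = 1 then [(p : ℤ)]
  else ((p / q : ℕ) : ℤ) :: build q (p % q)
termination_by q
decreasing_by exact Nat.mod_lt _ (by omega)

lemma build_spec : ∀ q p : ℕ, 0 < q → q < p → Nat.Coprime p q →
    build p q ≠ [] ∧ (∀ a ∈ build p q, 0 < a) ∧ 2 ≤ (build p q).getLast! ∧
      (Km (build p q)).1.1 = (p : ℤ) ∧ (Km (build p q)).2.1 = (q : ℤ) := by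
  intro q
  induction q using Nat.strong_induction_on with
  | _ q ih =>
      intro p hq hqp hcop
      by_cases h1 : q = 1
      · subst h1
        rw [show build p 1 = [(p:ℤ)] by rw [build]; norm_num]
        refine ⟨by simp, ?_, ?_, ?_, ?_⟩
        · intro a ha; simp at ha; subst ha; exact_mod_cast (by omega : 0 < p)
        · rw [List.getLast!_of_getLast? (by simp : ([(p:ℤ)]).getLast? = some (p:ℤ))]
          exact_mod_cast hqp
        · norm_num [Km, m2mul]
        · norm_num [Km, m2mul]
      · have hq2 : 2 ≤ q := by omega
        have hbd : build p q = ((p / q : ℕ) : ℤ) :: build q (p % q) := by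
          rw [build]; rw [dif_neg (by omega), if_neg h1]
        have hr0 : 0 < p % q := by
          rcases Nat.eq_zero_or_pos (p % q) with h | h
          · exfalso
            have hdvd : q ∣ p := Nat.dvd_of_mod_eq_zero h
            have hq1 : q ∣ 1 := hcop ▸ Nat.dvd_gcd hdvd dvd_rfl
            have := Nat.dvd_one.mp hq1
            omega
          · exact h
        have hrq : p % q < q := Nat.mod_lt _ (by omega)
        have hcop' : Nat.Coprime q (p % q) := by
          have : Nat.gcd q p = 1 := (Nat.coprime_comm.mp hcop)
          rw [Nat.Coprime, Nat.gcd_comm, ← Nat.gcd_rec]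
          exact this
        obtain ⟨hne, hpos, hlast, hK1, hK2⟩ := ih (p % q) hrq q hr0 hrq hcop'
        have hdivpos : (0:ℤ) < ((p / q : ℕ) : ℤ) := by
          have : 0 < p / q := Nat.div_pos (le_of_lt hqp) (by omega)
          exact_mod_cast this
        refine ⟨by rw [hbd]; simp, ?_, ?_, ?_, ?_⟩
        · intro a ha
          rw [hbd] at ha
          simp only [List.mem_cons] at ha
          rcases ha with h | h
          · subst h; exact hdivpos
          · exact hpos a h
        · rw [hbd, getLast!_cons_ne _ _ hne]
          exact hlast
        · rw [hbd, show Km (((p / q : ℕ) : ℤ) :: build q (p % q)) =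
            m2mul ((((p / q : ℕ) : ℤ),1),(1,0)) (Km (build q (p % q))) from rfl]
          have hpq : ((p / q : ℕ) : ℤ) * (q : ℤ) + ((p % q : ℕ) : ℤ) = (p : ℤ) := by
            have h0 : p / q * q + p % q = p := Nat.div_add_mod' p q
            exact_mod_cast congrArg (Nat.cast : ℕ → ℤ) h0
          simp only [m2mul, hK1, hK2]
          linarith [hpq]
        · rw [hbd, show Km (((p / q : ℕ) : ℤ) :: build q (p % q)) =
            m2mul ((((p / q : ℕ) : ℤ),1),(1,0)) (Km (build q (p % q))) from rfl]
          norm_num [m2mul, hK1]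

lemma getLast!_concat' (L : List ℤ) (a : ℤ) : (L ++ [a]).getLast! = a :=
  List.getLast!_of_getLast? (List.getLast?_concat (l := L))

lemma Km_norm (L : List ℤ) (w : ℤ) :
    (Km (L ++ [w, 1])).1.1 = (Km (L ++ [w+1])).1.1 ∧
    (Km (L ++ [w, 1])).2.1 = (Km (L ++ [w+1])).2.1 := by
  rw [Km_append, Km_append]
  rw [show Km [w, 1] = ((w+1, w),(1,1)) by norm_num [Km, m2mul],
    show Km [w+1] = ((w+1, 1),(1,0)) by norm_num [Km, m2mul]]
  simp [m2mul]

lemma Km_mid (I : List ℤ) (aN d : ℤ) (hd : d * d = 1) :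
    (Km (I ++ ([aN - d, aN + d] ++ I.reverse))).1.1 = ((Km I).1.1 * aN + (Km I).1.2)^2 ∧
    (Km (I ++ ([aN - d, aN + d] ++ I.reverse))).2.1 =
      ((Km I).1.1 * aN + (Km I).1.2) * ((Km I).2.1 * aN + (Km I).2.2) + d * m2det (Km I) := by
  rw [Km_append, Km_append, Km_reverse]
  rw [show Km [aN - d, aN + d] = (((aN-d)*(aN+d)+1, aN-d),(aN+d,1)) by
    norm_num [Km, m2mul]]
  rcases hKI : Km I with ⟨⟨r, s⟩, t, u⟩
  simp only [m2mul, m2T, m2det]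
  constructor
  · ring_nf
    linear_combination (-(r*r)) * hd
  · ring_nf
    linear_combination (-(r*t)) * hd

theorem crosscap_stmt11 (p q : ℕ) (hq : 1 < q) (hqp : q < p) (hcop : Nat.Coprime p q)
    (hpodd : Odd p) (hqodd : Odd q)
    (htypeB : ∀ x : ℤ, 0 < x → x < p → (p : ℤ) ∣ x * q + 1 → Odd x)
    (l1 l2 : List ℤ) (hl1 : ValidCF l1) (hl2 : ValidCF l2)
    (hc1 : cf l1 = ((p:ℚ) * q - 1) / (p:ℚ)^2)
    (hc2 : cf l2 = ((p:ℚ) * q + 1) / (p:ℚ)^2) :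
    Nsum l2 / 2 + 1 = Nsum l1 / 2 := by
  obtain ⟨hAne, hApos, hAlast, hKA1, hKA2⟩ := build_spec q p (by omega) hqp hcop
  set A := build p q with hAdef
  -- A has length ≥ 2
  have hr0 : 0 < p % q := by
    rcases Nat.eq_zero_or_pos (p % q) with h | h
    · exfalso
      have hdvd : q ∣ p := Nat.dvd_of_mod_eq_zero h
      have hq1 : q ∣ 1 := hcop ▸ Nat.dvd_gcd hdvd dvd_rfl
      have := Nat.dvd_one.mp hq1
      omega
    · exact h
  have hA2 : A = ((p / q : ℕ) : ℤ) :: build q (p % q) := by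
    rw [hAdef, build]; rw [dif_neg (by omega), if_neg (by omega)]
  have hBne : build q (p % q) ≠ [] := by
    rw [build]
    rw [dif_neg (by omega)]
    split <;> simp
  have hAlen : 2 ≤ A.length := by
    rw [hA2, List.length_cons]
    have := List.length_pos_iff.mpr hBne
    omega
  have hIne : A.dropLast ≠ [] := by
    have h1 : A.dropLast.length = A.length - 1 := List.length_dropLast
    intro h
    rw [h] at h1
    simp at h1
    omega
  set I := A.dropLast with hIdef
  set aN := A.getLast hAne with haNdef
  have hAsplit : I ++ [aN] = A := List.dropLast_append_getLast hAne
  have haN2 : 2 ≤ aN := by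
    have h1 : A.getLast? = some aN := List.getLast?_eq_getLast hAne
    have := List.getLast!_of_getLast? h1
    omega
  have hIpos : ∀ x ∈ I, 0 < x := by
    intro x hx
    exact hApos x (List.dropLast_sublist A |>.subset hx)
  rcases hKI : Km I with ⟨⟨r, s'⟩, t, u⟩
  have hKmA : Km A = m2mul ((r,s'),(t,u)) ((aN,1),(1,0)) := by
    rw [← hAsplit, Km_append, hKI, show Km [aN] = ((aN,1),(1,0)) by norm_num [Km, m2mul]]
  have hp : r * aN + s' = (p:ℤ) := by
    have h := hKA1
    rw [hKmA] at h
    simpa [m2mul] using h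
  have hq' : t * aN + u = (q:ℤ) := by
    have h := hKA2
    rw [hKmA] at h
    simpa [m2mul] using h
  have hdet : r * u - s' * t = 1 ∨ r * u - s' * t = -1 := by
    have := Km_det I
    rw [hKI] at this
    simpa [m2det] using this
  have hKpos : 1 ≤ r ∧ 0 ≤ s' ∧ 0 ≤ t ∧ 0 ≤ u := by
    have := Km_pos I hIpos
    rw [hKI] at this
    exact this
  obtain ⟨hr1, hs0, ht0, hu0⟩ := hKpos
  have hpZ : (1:ℤ) < (p:ℤ) := by exact_mod_cast lt_trans hq hqp
  have hqZ : (1:ℤ) < (q:ℤ) := by exact_mod_cast hq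
  have hrp : r < (p:ℤ) := by nlinarith
  -- parity of p and q as integers
  have hpodd2 : ¬ Even ((p:ℤ)) := by
    rw [Int.even_coe_nat, Nat.even_iff]
    rw [Nat.odd_iff] at hpodd
    omega
  have hqodd2 : ¬ Even ((q:ℤ)) := by
    rw [Int.even_coe_nat, Nat.even_iff]
    rw [Nat.odd_iff] at hqodd
    omega
  -- construct the (possibly normalized) reversed tail R'
  obtain ⟨R', hRpos, hRsplit, hcol⟩ :
      ∃ R' : List ℤ, (∀ z ∈ R', 0 < z) ∧ (∃ R'' w, R' = R'' ++ [w] ∧ 1 < w) ∧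
        (∀ m1 m2 : ℤ,
          (Km (I ++ ([m1, m2] ++ R'))).1.1 = (Km (I ++ ([m1, m2] ++ I.reverse))).1.1 ∧
          (Km (I ++ ([m1, m2] ++ R'))).2.1 = (Km (I ++ ([m1, m2] ++ I.reverse))).2.1) := by
    obtain ⟨a0, I', hI'⟩ : ∃ a0 I', I = a0 :: I' := by
      cases hI : I with
      | nil => exact absurd hI hIne
      | cons a0 I' => exact ⟨a0, I', rfl⟩
    have ha0 : 0 < a0 := hIpos a0 (by rw [hI']; simp)
    by_cases ha0e : a0 = 1
    · -- a0 = 1 : normalization needed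
      subst ha0e
      cases hI'' : I' with
      | nil =>
          -- I = [1] : impossible since then p = q + 1 with p, q odd
          exfalso
          rw [hI', hI''] at hKI
          have hK1 : Km [(1:ℤ)] = (((1:ℤ),(1:ℤ)),((1:ℤ),(0:ℤ))) := by norm_num [Km, m2mul]
          rw [hK1] at hKI
          have hr : r = 1 := by
            have := congrArg (fun A : M2 => A.1.1) hKI; simpa using this.symm
          have hs : s' = 1 := by
            have := congrArg (fun A : M2 => A.1.2) hKI; simpa using this.symm
          have ht : t = 1 := by
            have := congrArg (fun A : M2 => A.2.1) hKI; simpa using this.symm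
          have hu : u = 0 := by
            have := congrArg (fun A : M2 => A.2.2) hKI; simpa using this.symm
          subst hr; subst hs; subst ht; subst hu
          have hpq1 : (p:ℤ) = (q:ℤ) + 1 := by omega
          have : p = q + 1 := by exact_mod_cast hpq1
          rw [Nat.odd_iff] at hpodd hqodd
          omega
      | cons a1 I'' =>
          subst hI''
          have ha1 : 0 < a1 := hIpos a1 (by rw [hI']; simp)
          refine ⟨I''.reverse ++ [a1 + 1], ?_, ⟨I''.reverse, a1 + 1, rfl, by omega⟩, ?_⟩
          · intro z hz
            simp only [List.mem_append, List.mem_reverse, List.mem_singleton] at hz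
            rcases hz with h | h
            · exact hIpos z (by rw [hI']; simp [h])
            · subst h; omega
          · intro m1 m2
            have hrev : I.reverse = I''.reverse ++ [a1] ++ [(1:ℤ)] := by
              rw [hI']; simp
            have e1 : I ++ ([m1, m2] ++ (I''.reverse ++ [a1 + 1]))
                = (I ++ ([m1, m2] ++ I''.reverse)) ++ [a1 + 1] := by
              simp [List.append_assoc]
            have e2 : I ++ ([m1, m2] ++ I.reverse)
                = (I ++ ([m1, m2] ++ I''.reverse)) ++ [a1, 1] := by
              rw [hrev]; simp [List.append_assoc]
            rw [e1, e2]
            exact ⟨(Km_norm _ a1).1.symm, (Km_norm _ a1).2.symm⟩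
    · -- 1 < a0 : no normalization
      refine ⟨I.reverse, ?_, ⟨I'.reverse, a0, by rw [hI']; simp, by omega⟩, fun _ _ => ⟨rfl, rfl⟩⟩
      intro z hz
      exact hIpos z (by simpa using hz)
  -- identification of l1 and l2 via uniqueness of continued fractions
  have key : ∀ d : ℤ, (d = 1 ∨ d = -1) → ∀ l : List ℤ, ValidCF l →
      cf l = ((p:ℚ) * q + ((d * (r * u - s' * t) : ℤ) : ℚ)) / (p:ℚ)^2 →
      l = 0 :: (I ++ ([aN - d, aN + d] ++ R')) := by
    intro d hd l hl hcfl
    set T := I ++ ([aN - d, aN + d] ++ R') with hTdef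
    have hdd : d * d = 1 := by rcases hd with h | h <;> rw [h] <;> norm_num
    have hTpos : ∀ z ∈ T, 0 < z := by
      intro z hz
      rw [hTdef] at hz
      rcases List.mem_append.mp hz with h | h
      · exact hIpos z h
      rcases List.mem_append.mp h with h2 | h2
      · simp only [List.mem_cons, List.not_mem_nil, or_false] at h2
        rcases h2 with h3 | h3 <;> subst h3 <;> rcases hd with h4 | h4 <;> rw [h4] <;> omega
      · exact hRpos z h2
    have hTne : T ≠ [] := by
      rw [hTdef]
      intro h
      have := congrArg List.length h
      simp at this
    have hmid := Km_mid I aN d hdd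
    rw [hKI] at hmid
    obtain ⟨hcc1, hcc2⟩ := hcol (aN - d) (aN + d)
    have hK1 : (Km T).1.1 = (p:ℤ)^2 := by
      rw [hTdef, hcc1, hmid.1]
      simp only []
      rw [hp]
    have hK2 : (Km T).2.1 = (p:ℤ) * (q:ℤ) + d * (r * u - s' * t) := by
      rw [hTdef, hcc2, hmid.2]
      simp only [m2det]
      rw [hp, hq']
    have hcfT := cf_eq_Km T hTne hTpos
    have hcf0 : cf (0 :: T) = (((p:ℤ) * (q:ℤ) + d * (r * u - s' * t) : ℤ) : ℚ) / (((p:ℤ)^2 : ℤ) : ℚ) := by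
      rw [cf_cons 0 T hTne, hcfT.2, hK1, hK2, inv_div]
      push_cast
      ring
    have hvalid : ValidCF (0 :: T) := by
      obtain ⟨R'', w, hRw, hw⟩ := hRsplit
      refine ⟨by simp, by simp, ?_, ?_⟩
      · intro z hz
        exact hTpos z (by simpa using hz)
      · have hsplit : (0 : ℤ) :: T = (0 :: (I ++ ([aN - d, aN + d] ++ R''))) ++ [w] := by
          rw [hTdef, hRw]
          simp [List.append_assoc]
        rw [hsplit, getLast!_concat']
        exact hw
    apply cf_unique l (0 :: T) hl hvalid
    rw [hcfl, hcf0]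
    push_cast
    ring
  -- the automaton state after processing I
  have hsi := state_inv I hIpos
  rcases hst : runS I (0,0,0) with ⟨pa, pb, s⟩
  rw [hst, hKI] at hsi
  dsimp only at hsi
  have hs_nonneg : 0 ≤ s := by
    have := runS_ge I hIpos 0 0 0
    rw [hst] at this
    exact this
  have hNsum : ∀ m1 m2 : ℤ, Nsum (0 :: (I ++ ([m1, m2] ++ R'))) =
      (runS (m1 :: m2 :: R') (pa, pb, s)).2.2 := by
    intro m1 m2
    show NsumAux 0 0 0 (I ++ ([m1, m2] ++ R')) = _
    rw [NsumAux_eq_runS, runS_append, hst]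
    rfl
  rcases hdet with he | he
  · -- determinant e = 1 : the middle pair is emitted then skipped
    have hl2eq := key 1 (Or.inl rfl) l2 hl2 (by rw [hc2, one_mul, he]; norm_num)
    have hl1eq := key (-1) (Or.inr rfl) l1 hl1 (by rw [hc1, he]; ring_nf)
    -- type B gives r even
    have hdvd : ((p:ℤ)) ∣ ((p:ℤ) - r) * q + 1 :=
      ⟨(q:ℤ) - t, by linear_combination r * hq' + (-t) * hp + (-1) * he⟩
    have hprodd := htypeB ((p:ℤ) - r) (by omega) (by omega) hdvd
    have hr2 : r % 2 = 0 := by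
      rw [Int.odd_iff] at hprodd
      rw [Int.even_coe_nat, Nat.even_iff] at hpodd2
      have hp2 : (p:ℤ) % 2 = 1 := by omega
      omega
    have hreven : Even r := Int.even_iff.mpr hr2
    have hpt : (p:ℤ) * t = r * q - 1 := by
      linear_combination r * hq' + (-t) * hp + (-1) * he
    have hptodd : ¬ Even ((p:ℤ) * t) := by
      rw [hpt]
      rcases hreven.mul_right (q:ℤ) with ⟨k, hk⟩
      rintro ⟨m, hm⟩
      omega
    have ht_odd : ¬ Even t := fun hEt => hptodd (hEt.mul_left _)
    -- the state entering the middle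
    have hmidpar : ¬ (pb = pa ∧ Even s) ∧ Even (s + (aN - 1)) := by
      rcases Int.even_or_odd aN with hEa | hOa
      · have hEta : Even (t * aN) := hEa.mul_left t
        have hu_odd : ¬ Even u := by
          intro hEu
          exact hqodd2 (hq' ▸ (hEta.add hEu))
        obtain ⟨hpb, hiff⟩ := hsi.1 hu_odd
        have hs_odd : ¬ Even s := fun hEs => ht_odd (hiff.mp hEs)
        refine ⟨fun h => hs_odd h.2, ?_⟩
        have h1 : ¬ Even (aN - 1) := by
          rw [Int.even_sub]
          intro hiff2
          exact (by norm_num : ¬ Even (1:ℤ)) (hiff2.mp hEa)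
        exact Int.even_add.mpr (iff_of_false hs_odd h1)
      · have hOta : ¬ Even (t * aN) := by
          rw [Int.even_mul]
          rintro (h | h)
          · exact ht_odd h
          · exact (Int.not_even_iff_odd.mpr hOa) h
        have hu_even : Even u := by
          by_contra hOu
          exact hqodd2 (hq' ▸ Int.even_add.mpr (iff_of_false hOta hOu))
        obtain ⟨hpb, hEs⟩ := hsi.2 hu_even
        refine ⟨fun h => hpb h.1, ?_⟩
        have h1 : Even (aN - 1) :=
          Int.even_sub.mpr (iff_of_false (Int.not_even_iff_odd.mpr hOa) (by norm_num))
        exact Int.even_add.mpr (iff_of_true hEs h1)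
    obtain ⟨hC1, hC2⟩ := hmidpar
    have hC2' : Even (s + (aN - -1)) := by
      rcases hC2 with ⟨k, hk⟩
      exact ⟨k + 1, by omega⟩
    have hN2 : Nsum l2 = (runS R' (aN + 1, 0, s + (aN - 1) + 0)).2.2 := by
      rw [hl2eq, hNsum]
      simp only [runS]
      rw [if_neg hC1, if_pos ⟨rfl, hC2⟩]
    have hN1 : Nsum l1 = (runS R' (aN + -1, 0, s + (aN - -1) + 0)).2.2 := by
      rw [hl1eq, hNsum]
      simp only [runS]
      rw [if_neg hC1, if_pos ⟨rfl, hC2'⟩]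
    have hcong := runS_congr R' hRpos (aN + -1) 0 (s + (aN - -1) + 0) (aN + 1) 0 (s + (aN - 1) + 0)
      (iff_of_false (by omega) (by omega))
      (by
        constructor
        · rintro ⟨k, hk⟩; exact ⟨k - 1, by omega⟩
        · rintro ⟨k, hk⟩; exact ⟨k + 1, by omega⟩)
    have hge2 : s + (aN - 1) + 0 ≤ (runS R' (aN + 1, 0, s + (aN - 1) + 0)).2.2 :=
      runS_ge R' hRpos _ _ _
    rw [hN1, hN2]
    omega
  · -- determinant e = -1 : the middle pair starts with a skip
    have hl2eq := key (-1) (Or.inr rfl) l2 hl2 (by rw [hc2, he]; norm_num)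
    have hl1eq := key 1 (Or.inl rfl) l1 hl1 (by rw [hc1, one_mul, he]; ring_nf)
    -- type B gives r odd
    have hdvd : ((p:ℤ)) ∣ r * q + 1 :=
      ⟨t, by linear_combination (-r) * hq' + t * hp + he⟩
    have hr_odd := htypeB r (by omega) hrp hdvd
    have hr_odd' : ¬ Even r := Int.not_even_iff_odd.mpr hr_odd
    have hrq_odd : ¬ Even (r * (q:ℤ)) := by
      rw [Int.even_mul]
      rintro (h | h)
      · exact hr_odd' h
      · exact hqodd2 h
    have hpt : (p:ℤ) * t = r * q + 1 := by
      linear_combination r * hq' + (-t) * hp + (-1) * he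
    have hpt_even : Even ((p:ℤ) * t) := by
      rw [hpt]
      exact Int.even_add_one.mpr hrq_odd
    have ht_even : Even t := by
      rcases Int.even_mul.mp hpt_even with h | h
      · exact absurd h hpodd2
      · exact h
    have hu_odd : ¬ Even u := fun hEu => hqodd2 (hq' ▸ (ht_even.mul_right aN).add hEu)
    obtain ⟨hpb, hiff⟩ := hsi.1 hu_odd
    have hEs : Even s := hiff.mpr ht_even
    have hC : pb = pa ∧ Even s := ⟨hpb, hEs⟩
    have hC2 : ¬ ((0:ℤ) = aN - -1 ∧ Even (s + 0)) := by
      rintro ⟨h, -⟩; omega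
    have hC2' : ¬ ((0:ℤ) = aN - 1 ∧ Even (s + 0)) := by
      rintro ⟨h, -⟩; omega
    have hN2 : Nsum l2 = (runS R' (aN + -1, aN + -1, s + 0 + (aN + -1))).2.2 := by
      rw [hl2eq, hNsum]
      simp only [runS]
      rw [if_pos hC, if_neg hC2]
    have hN1 : Nsum l1 = (runS R' (aN + 1, aN + 1, s + 0 + (aN + 1))).2.2 := by
      rw [hl1eq, hNsum]
      simp only [runS]
      rw [if_pos hC, if_neg hC2']
    have hcong := runS_congr R' hRpos (aN + 1) (aN + 1) (s + 0 + (aN + 1))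
      (aN + -1) (aN + -1) (s + 0 + (aN + -1))
      (iff_of_true rfl rfl)
      (by
        constructor
        · rintro ⟨k, hk⟩; exact ⟨k - 1, by omega⟩
        · rintro ⟨k, hk⟩; exact ⟨k + 1, by omega⟩)
    have hge2 : s + 0 + (aN + -1) ≤ (runS R' (aN + -1, aN + -1, s + 0 + (aN + -1))).2.2 :=
      runS_ge R' hRpos _ _ _
    rw [hN1, hN2]
    omega
end

section
/- Let p > q > 0 be coprime with pq odd, let q/p = [a_0, ..., a_n] (a_0 = 0, a_i > 0, a_n > 1) with convergents q_i/p_i. If p_{n-1} is odd, then N(pq-1, p^2) = N(pq+1, p^2) + (-1)^n. -/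
set_option maxHeartbeats 1000000


/- ================= machine lemmas ================= -/

def bwStep (st : ℤ × ℤ × ℤ) (a : ℤ) : ℤ × ℤ × ℤ :=
  (a, if st.2.1 = st.1 ∧ Even st.2.2 then 0 else a,
      st.2.2 + if st.2.1 = st.1 ∧ Even st.2.2 then 0 else a)

theorem nsumAux_eq_foldl : ∀ (l : List ℤ) (pa pb s : ℤ),
    NsumAux pa pb s l = (List.foldl bwStep (pa, pb, s) l).2.2 := by
  intro l
  induction l with
  | nil => intro pa pb s; rfl
  | cons c l ih =>
      intro pa pb s
      simp only [NsumAux, List.foldl_cons, bwStep, ih]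

theorem nsumAux_parity : ∀ (l : List ℤ) (pa pb s t : ℤ), (Even s ↔ Even t) →
    NsumAux pa pb s l - s = NsumAux pa pb t l - t := by
  intro l
  induction l with
  | nil => intro pa pb s t h; simp [NsumAux]
  | cons c l ih =>
      intro pa pb s t h
      by_cases hc : pb = pa ∧ Even s
      · have hc' : pb = pa ∧ Even t := ⟨hc.1, h.mp hc.2⟩
        simp only [NsumAux, if_pos hc, if_pos hc', add_zero]
        have := ih c 0 s t h
        linarith
      · have hc' : ¬(pb = pa ∧ Even t) := by
          intro hx; exact hc ⟨hx.1, h.mpr hx.2⟩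
        simp only [NsumAux, if_neg hc, if_neg hc']
        have hpar : (Even (s + c) ↔ Even (t + c)) := by
          rcases Int.even_or_odd c with he | ho
          · simp [Int.even_add, h, he]
          · simp [Int.even_add, h, Int.not_even_iff_odd.2 ho]
        have := ih c c (s + c) (t + c) hpar
        linarith

theorem nsumAux_pair (l : List ℤ) (x y s t : ℤ) (h : Even s ↔ Even t) :
    NsumAux x x s l - s = NsumAux y y t l - t := by
  cases l with
  | nil => simp [NsumAux]
  | cons c l =>
      by_cases hs : Even s
      · have ht : Even t := h.mp hs
        simp only [NsumAux, eq_self_iff_true, true_and, if_pos hs, if_pos ht, add_zero]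
        exact nsumAux_parity l c 0 s t h
      · have ht : ¬ Even t := fun hx => hs (h.mpr hx)
        simp only [NsumAux, eq_self_iff_true, true_and, if_neg hs, if_neg ht]
        have hpar : Even (s + c) ↔ Even (t + c) := by
          rcases Int.even_or_odd c with he | ho
          · simp [Int.even_add, h, he]
          · simp [Int.even_add, h, Int.not_even_iff_odd.2 ho]
        have := nsumAux_parity l c c (s + c) (t + c) hpar
        linarith

/- ================= continued fraction matrices ================= -/

theorem cf_cons_cons (a b : ℤ) (l : List ℤ) : cf (a :: b :: l) = (a : ℚ) + (cf (b :: l))⁻¹ := rfl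

def cfM : List ℤ → ℤ × ℤ × ℤ × ℤ
  | [] => (1, 0, 0, 1)
  | x :: l =>
      (x * (cfM l).1 + (cfM l).2.2.1, x * (cfM l).2.1 + (cfM l).2.2.2, (cfM l).1, (cfM l).2.1)

def mmul (m n : ℤ × ℤ × ℤ × ℤ) : ℤ × ℤ × ℤ × ℤ :=
  (m.1 * n.1 + m.2.1 * n.2.2.1, m.1 * n.2.1 + m.2.1 * n.2.2.2,
   m.2.2.1 * n.1 + m.2.2.2 * n.2.2.1, m.2.2.1 * n.2.1 + m.2.2.2 * n.2.2.2)

theorem cfM_cons (x : ℤ) (l : List ℤ) : cfM (x :: l) = mmul (x, 1, 1, 0) (cfM l) := by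
  simp [cfM, mmul]

theorem cfM_append : ∀ (u v : List ℤ), cfM (u ++ v) = mmul (cfM u) (cfM v) := by
  intro u
  induction u with
  | nil => intro v; simp [cfM, mmul]
  | cons x u ih =>
      intro v
      simp only [List.cons_append, cfM_cons, ih]
      simp only [mmul, Prod.mk.injEq]
      refine ⟨by ring, by ring, by ring, by ring⟩

def mtrans (m : ℤ × ℤ × ℤ × ℤ) : ℤ × ℤ × ℤ × ℤ := (m.1, m.2.2.1, m.2.1, m.2.2.2)

theorem cfM_reverse : ∀ l : List ℤ, cfM l.reverse = mtrans (cfM l) := by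
  intro l
  induction l with
  | nil => simp [cfM, mtrans]
  | cons x l ih =>
      rw [List.reverse_cons, cfM_append, ih, cfM_cons]
      simp only [mmul, mtrans, cfM, Prod.mk.injEq]
      refine ⟨by ring, by ring, by ring, by ring⟩

theorem cfM_det : ∀ l : List ℤ,
    (cfM l).1 * (cfM l).2.2.2 - (cfM l).2.1 * (cfM l).2.2.1 = (-1) ^ l.length := by
  intro l
  induction l with
  | nil => simp [cfM]
  | cons x l ih =>
      simp only [cfM, List.length_cons, pow_succ]
      nlinarith [ih]

theorem cf_pos_eq : ∀ l : List ℤ, l ≠ [] → (∀ x ∈ l, 0 < x) →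
    0 < (cfM l).1 ∧ 0 < (cfM l).2.2.1 ∧ cf l = ((cfM l).1 : ℚ) / ((cfM l).2.2.1 : ℚ) := by
  intro l
  induction l with
  | nil => intro h; exact absurd rfl h
  | cons x l ih =>
      intro _ hpos
      cases l with
      | nil =>
          have hx : 0 < x := hpos x (by simp)
          refine ⟨by simpa [cfM] using hx, by norm_num [cfM], ?_⟩
          simp [cf, cfM]
      | cons y l' =>
          have hl : (y :: l') ≠ [] := by simp
          have hpos' : ∀ z ∈ y :: l', 0 < z := fun z hz => hpos z (by simp [hz])
          obtain ⟨ha, hc, hcf⟩ := ih hl hpos'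
          have hx : 0 < x := hpos x (by simp)
          set A := (cfM (y :: l')).1 with hA
          set C := (cfM (y :: l')).2.2.1 with hC
          have hA0 : (A : ℚ) ≠ 0 := by exact_mod_cast ha.ne'
          refine ⟨?_, ?_, ?_⟩
          · show 0 < x * A + C
            positivity
          · show 0 < A
            exact ha
          · rw [cf_cons_cons, hcf]
            show _ = ((x * A + C : ℤ) : ℚ) / (A : ℚ)
            have hC0 : (C : ℚ) ≠ 0 := by exact_mod_cast hc.ne'
            rw [inv_div]
            push_cast
            field_simp

/- ================= uniqueness ================= -/

theorem one_lt_cf_s12 : ∀ l : List ℤ, l ≠ [] → (∀ x ∈ l, 0 < x) →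
    (∀ x, l.getLast? = some x → 1 < x) → 1 < cf l := by
  intro l
  induction l with
  | nil => intro h; exact absurd rfl h
  | cons a l ih =>
      intro _ hpos hlast
      cases l with
      | nil =>
          have := hlast a (by simp)
          show (1 : ℚ) < (a : ℚ)
          exact_mod_cast this
      | cons b l' =>
          have h1 : 1 < cf (b :: l') := by
            refine ih (by simp) (fun x hx => hpos x (by simp [hx])) ?_
            intro x hx
            exact hlast x (by rwa [List.getLast?_cons_cons])
          have ha : (1 : ℚ) ≤ (a : ℚ) := by
            exact_mod_cast hpos a (by simp)
          rw [cf_cons_cons]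
          have : 0 < (cf (b :: l'))⁻¹ := by positivity
          linarith

theorem cf_frac_bounds (l : List ℤ) (hne : l ≠ []) (hpos : ∀ x ∈ l, 0 < x)
    (hlast : ∀ x, l.getLast? = some x → 1 < x) :
    0 < (cf l)⁻¹ ∧ (cf l)⁻¹ < 1 := by
  have h := one_lt_cf_s12 l hne hpos hlast
  constructor
  · positivity
  · rw [inv_lt_one_iff₀]; right; exact h

theorem cf_inj_pos : ∀ l l' : List ℤ, (∀ x ∈ l, 0 < x) → (∀ x ∈ l', 0 < x) →
    l ≠ [] → l' ≠ [] →
    (∀ x, l.getLast? = some x → 1 < x) → (∀ x, l'.getLast? = some x → 1 < x) →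
    cf l = cf l' → l = l' := by
  intro l
  induction l with
  | nil => intro l' _ _ h; exact absurd rfl h
  | cons a l ih =>
      intro l' hpos hpos' _ hne' hlast hlast' hcf
      cases l' with
      | nil => exact absurd rfl hne'
      | cons b l'' =>
          cases l with
          | nil =>
              cases l'' with
              | nil =>
                  have : (a : ℚ) = (b : ℚ) := hcf
                  have : a = b := by exact_mod_cast this
                  simp [this]
              | cons c r =>
                  exfalso
                  obtain ⟨h0, h1⟩ := cf_frac_bounds (c :: r) (by simp)
                    (fun x hx => hpos' x (by simp [hx]))
                    (fun x hx => hlast' x (by rwa [List.getLast?_cons_cons]))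
                  have : (a : ℚ) = (b : ℚ) + (cf (c :: r))⁻¹ := hcf
                  have hab : ((a - b : ℤ) : ℚ) = (cf (c :: r))⁻¹ := by push_cast; linarith
                  have h2 : (0 : ℚ) < ((a - b : ℤ) : ℚ) := by rw [hab]; exact h0
                  have h3 : ((a - b : ℤ) : ℚ) < 1 := by rw [hab]; exact h1
                  have h4 : (0 : ℤ) < a - b := by exact_mod_cast h2
                  have h5 : (a - b : ℤ) < 1 := by exact_mod_cast h3
                  omega
          | cons c r =>
              cases l'' with
              | nil =>
                  exfalso
                  obtain ⟨h0, h1⟩ := cf_frac_bounds (c :: r) (by simp)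
                    (fun x hx => hpos x (by simp [hx]))
                    (fun x hx => hlast x (by rwa [List.getLast?_cons_cons]))
                  have : (a : ℚ) + (cf (c :: r))⁻¹ = (b : ℚ) := hcf
                  have hab : ((b - a : ℤ) : ℚ) = (cf (c :: r))⁻¹ := by push_cast; linarith
                  have h2 : (0 : ℚ) < ((b - a : ℤ) : ℚ) := by rw [hab]; exact h0
                  have h3 : ((b - a : ℤ) : ℚ) < 1 := by rw [hab]; exact h1
                  have h4 : (0 : ℤ) < b - a := by exact_mod_cast h2
                  have h5 : (b - a : ℤ) < 1 := by exact_mod_cast h3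
                  omega
              | cons d r' =>
                  have hpl : ∀ x ∈ c :: r, 0 < x := fun x hx => hpos x (by simp [hx])
                  have hpl' : ∀ x ∈ d :: r', 0 < x := fun x hx => hpos' x (by simp [hx])
                  have hll : ∀ x, (c :: r).getLast? = some x → 1 < x :=
                    fun x hx => hlast x (by rwa [List.getLast?_cons_cons])
                  have hll' : ∀ x, (d :: r').getLast? = some x → 1 < x :=
                    fun x hx => hlast' x (by rwa [List.getLast?_cons_cons])
                  obtain ⟨h0, h1⟩ := cf_frac_bounds (c :: r) (by simp) hpl hll
                  obtain ⟨h0', h1'⟩ := cf_frac_bounds (d :: r') (by simp) hpl' hll'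
                  have heq : (a : ℚ) + (cf (c :: r))⁻¹ = (b : ℚ) + (cf (d :: r'))⁻¹ := hcf
                  have hab : a = b := by
                    have h2 : ((a - b : ℤ) : ℚ) < 1 := by push_cast; linarith
                    have h3 : (-1 : ℚ) < ((a - b : ℤ) : ℚ) := by push_cast; linarith
                    have h4 : (a - b : ℤ) < 1 := by exact_mod_cast h2
                    have h5 : (-1 : ℤ) < a - b := by exact_mod_cast h3
                    omega
                  subst hab
                  have hinv : (cf (c :: r))⁻¹ = (cf (d :: r'))⁻¹ := by linarith
                  have hcf2 : cf (c :: r) = cf (d :: r') := by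
                    have := inv_inv (cf (c :: r)) ▸ congrArg Inv.inv hinv
                    simpa using this
                  have := ih (d :: r') hpl hpl' (by simp) (by simp) hll hll' hcf2
                  rw [this]

theorem getLast!_eq_of_getLast? : ∀ (l : List ℤ) (x : ℤ), l.getLast? = some x → l.getLast! = x := by
  intro l x hx
  cases l with
  | nil => simp at hx
  | cons a l =>
      rw [List.getLast?_cons] at hx
      rw [List.getLast!_cons_eq_getLastD, List.getLastD_eq_getLast?]
      exact Option.some_injective _ hx

theorem valid_head_zero (l : List ℤ) (hv : ValidCF l) (h0 : 0 < cf l) (h1 : cf l < 1) :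
    ∃ tl, l = 0 :: tl ∧ tl ≠ [] ∧ (∀ x ∈ tl, 0 < x) ∧
      (∀ x, tl.getLast? = some x → 1 < x) ∧ cf tl = (cf l)⁻¹ := by
  obtain ⟨hne, hhead, htail, hlast⟩ := hv
  cases l with
  | nil => exact absurd rfl hne
  | cons hd tl =>
      cases tl with
      | nil =>
          exfalso
          have hh : (hd : ℤ) > 1 := by simpa [List.getLast!_cons_eq_getLastD] using hlast
          have : (1 : ℚ) < (hd : ℚ) := by exact_mod_cast hh
          have hcf : cf [hd] = (hd : ℚ) := rfl
          rw [hcf] at h1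
          linarith
      | cons y r =>
          have htail' : ∀ x ∈ y :: r, 0 < x := by
            intro x hx; exact htail x (by simpa using hx)
          have hlast' : ∀ x, (y :: r).getLast? = some x → 1 < x := by
            intro x hx
            have h3 : (hd :: y :: r).getLast! = x := by
              rw [List.getLast!_cons_eq_getLastD, List.getLastD_eq_getLast?, hx]
              rfl
            rw [h3] at hlast
            exact hlast
          have hgt := one_lt_cf_s12 (y :: r) (by simp) htail' hlast'
          have hinv0 : 0 < (cf (y :: r))⁻¹ := by positivity
          have hinv1 : (cf (y :: r))⁻¹ < 1 := (cf_frac_bounds _ (by simp) htail' hlast').2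
          have hcfl : cf (hd :: y :: r) = (hd : ℚ) + (cf (y :: r))⁻¹ := rfl
          have hhd : hd = 0 := by
            have hh0 : (0 : ℤ) ≤ hd := by simpa using hhead
            have hh1 : (hd : ℚ) < 1 := by rw [hcfl] at h1; linarith
            have : hd < 1 := by exact_mod_cast hh1
            omega
          subst hhd
          refine ⟨y :: r, rfl, by simp, htail', hlast', ?_⟩
          rw [hcfl]
          have hne0 : cf (y :: r) ≠ 0 := by linarith
          push_cast
          rw [zero_add, inv_inv]

/- ============ invariant ============ -/

theorem parity_char {p' q' p q : ℤ} (hdet : Odd (p * q' - p' * q)) :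
    ((¬(Odd p' ∧ Even q')) ∧ (¬(Odd q ∧ Odd q'))) ↔ (Odd p ∧ Even q) := by
  simp only [Int.even_sub, Int.even_mul, ← Int.not_even_iff_odd] at hdet ⊢
  tauto

section Invariant

variable (a P Q : ℕ → ℤ)
variable (hP0 : P 0 = 1) (hP1 : P 1 = a 1) (hPr : ∀ i, P (i+2) = a (i+2) * P (i+1) + P i)
variable (hQ0 : Q 0 = 0) (hQ1 : Q 1 = 1) (hQr : ∀ i, Q (i+2) = a (i+2) * Q (i+1) + Q i)

include hP0 hP1 hPr hQ0 hQ1 hQr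

theorem pq_det : ∀ j : ℕ, P (j+1) * Q j - P j * Q (j+1) = (-1) ^ (j+1) := by
  intro j
  induction j with
  | zero => simp [hP0, hP1, hQ0, hQ1]
  | succ j ih =>
      rw [hPr j, hQr j, pow_succ]
      nlinarith [ih]

theorem bw_invariant (m : ℕ) (hpos : ∀ i, 1 ≤ i → i ≤ m → 0 < a i) :
    ∀ j : ℕ, j + 1 ≤ m →
      ∃ b s : ℤ, List.foldl bwStep (0, 0, 0) (List.ofFn fun i : Fin (j+1) => a (i+1)) = (a (j+1), b, s) ∧
        ((b = a (j+1)) ↔ ¬(Odd (P j) ∧ Even (Q j))) ∧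
        (Even s ↔ ¬(Odd (Q (j+1)) ∧ Odd (Q j))) := by
  intro j
  induction j with
  | zero =>
      intro hm
      have ha1 : 0 < a 1 := hpos 1 le_rfl hm
      refine ⟨0, 0, ?_, ?_, ?_⟩
      · norm_num [List.ofFn_succ, bwStep]
      · simp only [hP0, hQ0]
        constructor
        · intro h; exact absurd h.symm ha1.ne'
        · intro h; exact absurd ⟨odd_one, Even.zero⟩ h
      · simp [hQ0]
  | succ j ih =>
      intro hm
      obtain ⟨b, s, hrun, hB, hS⟩ := ih (by omega)
      have hofn : (List.ofFn fun i : Fin (j+2) => a (i+1)) =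
          (List.ofFn fun i : Fin (j+1) => a (i+1)) ++ [a (j+2)] := by
        rw [List.ofFn_succ']
        simp [List.concat_eq_append]
      rw [hofn, List.foldl_append, hrun]
      have hdet1 : Odd (P (j+1) * Q j - P j * Q (j+1)) := by
        rw [pq_det a P Q hP0 hP1 hPr hQ0 hQ1 hQr j]
        rcases Nat.even_or_odd (j+1) with he | ho
        · rw [he.neg_one_pow]; exact odd_one
        · rw [ho.neg_one_pow]; exact ⟨-1, by ring⟩
      have hchar := parity_char (p := P (j+1)) (q := Q (j+1)) hdet1
      have hc : 0 < a (j+2) := hpos (j+2) (by omega) hm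
      by_cases hR : b = a (j+1) ∧ Even s
      · have hPQ : Odd (P (j+1)) ∧ Even (Q (j+1)) := hchar.mp ⟨hB.mp hR.1, hS.mp hR.2⟩
        refine ⟨0, s, ?_, ?_, ?_⟩
        · simp only [List.foldl_cons, List.foldl_nil, bwStep]
          rw [if_pos hR, add_zero]
        · constructor
          · intro h; exact absurd h.symm hc.ne'
          · intro h; exact absurd hPQ h
        · constructor
          · intro _ hx; exact (Int.not_even_iff_odd.mpr hx.2) hPQ.2
          · intro _; exact hR.2
      · have hPQ : ¬(Odd (P (j+1)) ∧ Even (Q (j+1))) := by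
          rw [← hchar]
          intro hx
          exact hR ⟨hB.mpr hx.1, hS.mpr hx.2⟩
        refine ⟨a (j+2), s + a (j+2), ?_, ?_, ?_⟩
        · simp only [List.foldl_cons, List.foldl_nil, bwStep]
          rw [if_neg hR]
        · simp [hPQ]
        · rw [hQr j, Int.even_add]
          clear hrun hofn ih hchar hB hR
          simp only [Int.even_mul, Int.even_sub, Int.even_add, ← Int.not_even_iff_odd] at hS hPQ hdet1 ⊢
          tauto


theorem cfM_PQ : ∀ j : ℕ, cfM (List.ofFn fun i : Fin (j+1) => a (i+1)) = (P (j+1), P j, Q (j+1), Q j) := by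
  intro j
  induction j with
  | zero =>
      simp only [List.ofFn_succ, List.ofFn_zero]
      simp [cfM, hP0, hP1, hQ0, hQ1]
  | succ j ih =>
      have hofn : (List.ofFn fun i : Fin (j+2) => a (i+1)) =
          (List.ofFn fun i : Fin (j+1) => a (i+1)) ++ [a (j+2)] := by
        rw [List.ofFn_succ']
        simp [List.concat_eq_append]
      rw [hofn, cfM_append, ih, hPr j, hQr j]
      simp only [mmul, cfM, Prod.mk.injEq]
      refine ⟨by ring, by ring, by ring, by ring⟩

end Invariant
theorem crosscap_stmt12 (p q n : ℕ) (a P Q : ℕ → ℤ)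
    (hq : 0 < q) (hqp : q < p) (hcop : Nat.Coprime p q) (hpodd : Odd p) (hqodd : Odd q)
    (h0 : a 0 = 0) (hpos : ∀ i, 1 ≤ i → i ≤ n → 0 < a i) (hlast : 1 < a n)
    (hcf : cf (List.ofFn fun i : Fin (n+1) => a i) = (q : ℚ) / p)
    (hP0 : P 0 = 1) (hP1 : P 1 = a 1) (hPr : ∀ i, P (i+2) = a (i+2) * P (i+1) + P i)
    (hQ0 : Q 0 = 0) (hQ1 : Q 1 = 1) (hQr : ∀ i, Q (i+2) = a (i+2) * Q (i+1) + Q i)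
    (hPn : P n = p) (hQn : Q n = q)
    (hPodd : Odd (P (n-1)))
    (l1 l2 : List ℤ) (hl1 : ValidCF l1) (hl2 : ValidCF l2)
    (hc1 : cf l1 = ((p:ℚ) * q - 1) / (p:ℚ)^2)
    (hc2 : cf l2 = ((p:ℚ) * q + 1) / (p:ℚ)^2) :
    Nsum l1 / 2 = Nsum l2 / 2 + (-1)^n := by
  have hodd_pow : ∀ k : ℕ, Odd ((-1:ℤ)^k) := by
    intro k
    rcases Nat.even_or_odd k with h | h
    · rw [h.neg_one_pow]; exact odd_one
    · rw [h.neg_one_pow]; exact ⟨-1, by ring⟩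
  rcases n with _ | m
  · rw [h0] at hlast; norm_num at hlast
  -- basic numeric facts
  have hp2 : 2 ≤ p := by omega
  have hp3 : 3 ≤ p := by
    rcases hpodd with ⟨k, hk⟩; omega
  have hqp2 : q + 2 ≤ p := by
    rcases hpodd with ⟨k, hk⟩; rcases hqodd with ⟨j, hj⟩; omega
  have hpZ : Odd ((p : ℤ)) := by rcases hpodd with ⟨k, hk⟩; exact ⟨k, by exact_mod_cast hk⟩
  have hqZ : Odd ((q : ℤ)) := by rcases hqodd with ⟨k, hk⟩; exact ⟨k, by exact_mod_cast hk⟩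
  have hc2' : 1 < a (m+1) := hlast
  obtain ⟨w, hw⟩ : ∃ w : List ℤ, w = List.ofFn fun i : Fin m => a (i+1) := ⟨_, rfl⟩
  have hwpos : ∀ x ∈ w, 0 < x := by
    intro x hx
    rw [hw] at hx
    rw [List.mem_ofFn] at hx
    obtain ⟨i, hi⟩ := hx
    rw [← hi]
    exact hpos (i+1) (by omega) (by have := i.isLt; omega)
  -- machine state after w
  obtain ⟨x0, b0, s0, hrun, hb0, hs0⟩ :
      ∃ x b s : ℤ, List.foldl bwStep (0,0,0) w = (x, b, s) ∧ b = x ∧ Even s := by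
    cases m with
    | zero =>
        refine ⟨0, 0, 0, ?_, rfl, Even.zero⟩
        rw [hw]
        simp [List.ofFn_zero]
    | succ j =>
        have hdetn : Odd (P (j+1+1) * Q (j+1) - P (j+1) * Q (j+1+1)) := by
          rw [pq_det a P Q hP0 hP1 hPr hQ0 hQ1 hQr (j+1)]
          exact hodd_pow _
        have hPn1odd : Odd (P (j+1)) := by simpa using hPodd
        have hQn1even : Even (Q (j+1)) := by
          by_contra hQe
          have hQo : Odd (Q (j+1)) := Int.not_even_iff_odd.mp hQe
          have h1 : Odd (P (j+1+1) * Q (j+1)) := by rw [hPn]; exact hpZ.mul hQo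
          have h2 : Odd (P (j+1) * Q (j+1+1)) := by rw [hQn]; exact hPn1odd.mul hqZ
          have heven : Even (P (j+1+1) * Q (j+1) - P (j+1) * Q (j+1+1)) := h1.sub_odd h2
          exact (Int.not_odd_iff_even.mpr heven) hdetn
        have hdet1 : Odd (P (j+1) * Q j - P j * Q (j+1)) := by
          rw [pq_det a P Q hP0 hP1 hPr hQ0 hQ1 hQr j]
          exact hodd_pow _
        have hchar := parity_char hdet1
        obtain ⟨b, s, hrun', hB, hS⟩ := bw_invariant a P Q hP0 hP1 hPr hQ0 hQ1 hQr (j+1)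
          (fun i hi1 hi2 => hpos i hi1 (by omega)) j le_rfl
        have hLR := hchar.mpr ⟨hPn1odd, hQn1even⟩
        exact ⟨a (j+1), b, s, by rw [hw]; exact hrun', hB.mpr hLR.1, hS.mpr hLR.2⟩
  -- matrix facts for w
  have hdetw : (cfM w).1 * (cfM w).2.2.2 - (cfM w).2.1 * (cfM w).2.2.1 = (-1)^m := by
    rw [hw, cfM_det, List.length_ofFn]
  obtain ⟨hp', hq'⟩ : (p:ℤ) = a (m+1) * (cfM w).1 + (cfM w).2.1 ∧
      (q:ℤ) = a (m+1) * (cfM w).2.2.1 + (cfM w).2.2.2 := by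
    cases m with
    | zero =>
        rw [hw]
        simp only [List.ofFn_zero]
        constructor
        · have h : (p:ℤ) = a 1 := by rw [← hPn, hP1]
          simp [cfM, h]
        · have h : (q:ℤ) = 1 := by rw [← hQn, hQ1]
          simp [cfM, h]
    | succ j =>
        rw [hw, cfM_PQ a P Q hP0 hP1 hPr hQ0 hQ1 hQr j]
        constructor
        · rw [← hPn, hPr j]
        · rw [← hQn, hQr j]
  -- the common tail T
  obtain ⟨T, hTpos, hTc1, hTc2, hTlast, hTnil⟩ :
      ∃ T : List ℤ, (∀ x ∈ T, 0 < x) ∧ (cfM T).1 = (cfM w).1 ∧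
        (cfM T).2.2.1 = (cfM w).2.1 ∧ (∀ x, T.getLast? = some x → 1 < x) ∧
        (T = [] → 3 ≤ a (m+1)) := by
    cases m with
    | zero =>
        refine ⟨[], by simp, by rw [hw]; rfl, by rw [hw]; rfl, by simp, ?_⟩
        intro _
        have hpa : (p:ℤ) = a 1 := by rw [← hPn, hP1]
        have h3 : (3:ℤ) ≤ (p:ℤ) := by exact_mod_cast hp3
        show (3:ℤ) ≤ a 1
        omega
    | succ j =>
        by_cases ha1 : a 1 = 1
        · cases j with
          | zero =>
              exfalso
              have hp2' : (p:ℤ) = a 2 * a 1 + 1 := by rw [← hPn, hPr 0, hP1, hP0]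
              have hq2' : (q:ℤ) = a 2 := by rw [← hQn, hQr 0, hQ1, hQ0]; ring
              rw [ha1, mul_one] at hp2'
              rcases hpZ with ⟨k, hk⟩
              rcases hqZ with ⟨t, ht⟩
              omega
          | succ j' =>
              have hw2 : w = a 1 :: a 2 :: List.ofFn (fun i : Fin j' => a (i+1+1+1)) := by
                rw [hw, List.ofFn_succ, List.ofFn_succ]
                simp [Fin.val_succ]
              refine ⟨(List.ofFn (fun i : Fin j' => a (i+1+1+1))).reverse ++ [a 2 + 1],
                ?_, ?_, ?_, ?_, by simp⟩
              · intro x hx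
                rcases List.mem_append.mp hx with hx | hx
                · rw [List.mem_reverse, List.mem_ofFn] at hx
                  obtain ⟨i, hi⟩ := hx
                  rw [← hi]
                  exact hpos (i+1+1+1) (by omega) (by have := i.isLt; omega)
                · have hx' : x = a 2 + 1 := by simpa using hx
                  have := hpos 2 (by omega) (by omega)
                  omega
              · have hrev : w.reverse =
                    (List.ofFn (fun i : Fin j' => a (i+1+1+1))).reverse ++ [a 2, a 1] := by
                  rw [hw2]
                  simp
                have hcw : (cfM w.reverse).1 = (cfM w).1 := by rw [cfM_reverse]; rfl
                rw [← hcw, hrev, ha1, cfM_append, cfM_append]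
                simp [mmul, cfM]
              · have hrev : w.reverse =
                    (List.ofFn (fun i : Fin j' => a (i+1+1+1))).reverse ++ [a 2, a 1] := by
                  rw [hw2]
                  simp
                have hcw : (cfM w.reverse).2.2.1 = (cfM w).2.1 := by rw [cfM_reverse]; rfl
                rw [← hcw, hrev, ha1, cfM_append, cfM_append]
                simp [mmul, cfM]
              · intro x hx
                rw [List.getLast?_concat] at hx
                have hx' : a 2 + 1 = x := by simpa using hx
                have := hpos 2 (by omega) (by omega)
                omega
        · refine ⟨w.reverse, ?_, by rw [cfM_reverse]; rfl, by rw [cfM_reverse]; rfl, ?_, ?_⟩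
          · intro x hx
            exact hwpos x (List.mem_reverse.mp hx)
          · intro x hx
            rw [List.getLast?_reverse] at hx
            have hhd : w.head? = some (a 1) := by
              rw [hw]
              simp [List.ofFn_succ]
            rw [hhd] at hx
            have hx' : a 1 = x := by simpa using hx
            have := hpos 1 (by omega) (by omega)
            omega
          · intro h
            rw [List.reverse_eq_nil_iff, hw] at h
            have := congrArg List.length h
            simp at this
  -- the two candidate lists
  obtain ⟨LA, hLA⟩ : ∃ L : List ℤ, L = w ++ ((a (m+1) - 1) :: (a (m+1) + 1) :: T) := ⟨_, rfl⟩
  obtain ⟨LB, hLB⟩ : ∃ L : List ℤ, L = w ++ ((a (m+1) + 1) :: (a (m+1) - 1) :: T) := ⟨_, rfl⟩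
  have hAne : LA ≠ [] := by rw [hLA]; simp
  have hBne : LB ≠ [] := by rw [hLB]; simp
  have hApos : ∀ x ∈ LA, 0 < x := by
    intro x hx
    rw [hLA, List.mem_append] at hx
    rcases hx with hx | hx
    · exact hwpos x hx
    · simp only [List.mem_cons] at hx
      rcases hx with rfl | rfl | hx
      · omega
      · omega
      · exact hTpos x hx
  have hBpos : ∀ x ∈ LB, 0 < x := by
    intro x hx
    rw [hLB, List.mem_append] at hx
    rcases hx with hx | hx
    · exact hwpos x hx
    · simp only [List.mem_cons] at hx
      rcases hx with rfl | rfl | hx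
      · omega
      · omega
      · exact hTpos x hx
  have hAlast : ∀ x, LA.getLast? = some x → 1 < x := by
    intro x hx
    rw [hLA, List.getLast?_append_of_ne_nil _ (by simp)] at hx
    cases T with
    | nil =>
        have hx' : a (m+1) + 1 = x := by simpa using hx
        omega
    | cons t0 T' =>
        rw [List.getLast?_cons_cons, List.getLast?_cons_cons] at hx
        exact hTlast x hx
  have hBlast : ∀ x, LB.getLast? = some x → 1 < x := by
    intro x hx
    rw [hLB, List.getLast?_append_of_ne_nil _ (by simp)] at hx
    cases T with
    | nil =>
        have hx' : a (m+1) - 1 = x := by simpa using hx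
        have := hTnil rfl
        omega
    | cons t0 T' =>
        rw [List.getLast?_cons_cons, List.getLast?_cons_cons] at hx
        exact hTlast x hx
  -- continued fraction values
  obtain ⟨hA1pos, hC1pos, hAcf⟩ := cf_pos_eq LA hAne hApos
  obtain ⟨hB1pos, hD1pos, hBcf⟩ := cf_pos_eq LB hBne hBpos
  have hA1 : (cfM LA).1 = (p:ℤ) * p := by
    rw [hLA, cfM_append]
    simp only [mmul, cfM]
    rw [hTc1, hTc2, hp']
    ring
  have hC1 : (cfM LA).2.2.1 = (p:ℤ) * q + (-1)^m := by
    rw [hLA, cfM_append]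
    simp only [mmul, cfM]
    rw [hTc1, hTc2, hp', hq', ← hdetw]
    ring
  have hB1 : (cfM LB).1 = (p:ℤ) * p := by
    rw [hLB, cfM_append]
    simp only [mmul, cfM]
    rw [hTc1, hTc2, hp']
    ring
  have hD1 : (cfM LB).2.2.1 = (p:ℤ) * q - (-1)^m := by
    rw [hLB, cfM_append]
    simp only [mmul, cfM]
    rw [hTc1, hTc2, hp', hq', ← hdetw]
    ring
  -- Nsum computations
  have hne1 : ¬((0:ℤ) = a (m+1) - 1 ∧ Even s0) := by
    intro hx; have := hx.1; omega
  have hne2 : ¬((0:ℤ) = a (m+1) + 1 ∧ Even s0) := by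
    intro hx; have := hx.1; omega
  have hNA : Nsum (0 :: LA) = NsumAux (a (m+1) + 1) (a (m+1) + 1) (s0 + (a (m+1) + 1)) T := by
    show NsumAux 0 0 0 LA = _
    rw [nsumAux_eq_foldl, hLA, List.foldl_append, hrun, List.foldl_cons, List.foldl_cons]
    have e1 : bwStep (x0, b0, s0) (a (m+1) - 1) = (a (m+1) - 1, 0, s0) := by
      simp only [bwStep]
      rw [if_pos ⟨hb0, hs0⟩, add_zero]
    have e2 : bwStep (a (m+1) - 1, 0, s0) (a (m+1) + 1) =
        (a (m+1) + 1, a (m+1) + 1, s0 + (a (m+1) + 1)) := by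
      simp only [bwStep]
      rw [if_neg hne1]
    rw [e1, e2, ← nsumAux_eq_foldl]
  have hNB : Nsum (0 :: LB) = NsumAux (a (m+1) - 1) (a (m+1) - 1) (s0 + (a (m+1) - 1)) T := by
    show NsumAux 0 0 0 LB = _
    rw [nsumAux_eq_foldl, hLB, List.foldl_append, hrun, List.foldl_cons, List.foldl_cons]
    have e1 : bwStep (x0, b0, s0) (a (m+1) + 1) = (a (m+1) + 1, 0, s0) := by
      simp only [bwStep]
      rw [if_pos ⟨hb0, hs0⟩, add_zero]
    have e2 : bwStep (a (m+1) + 1, 0, s0) (a (m+1) - 1) =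
        (a (m+1) - 1, a (m+1) - 1, s0 + (a (m+1) - 1)) := by
      simp only [bwStep]
      rw [if_neg hne2]
    rw [e1, e2, ← nsumAux_eq_foldl]
  have hkey : Nsum (0 :: LA) = Nsum (0 :: LB) + 2 := by
    have hpar : Even (s0 + (a (m+1) + 1)) ↔ Even (s0 + (a (m+1) - 1)) := by
      simp only [Int.even_iff]; omega
    have hd := nsumAux_pair T (a (m+1) + 1) (a (m+1) - 1)
      (s0 + (a (m+1) + 1)) (s0 + (a (m+1) - 1)) hpar
    rw [hNA, hNB]
    omega
  -- bounds for cf l1, cf l2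
  have hpQ : (0:ℚ) < (p:ℚ) := by exact_mod_cast (by omega : 0 < p)
  have hnum1 : (0:ℚ) < (p:ℚ) * q - 1 := by
    have h3 : 3 ≤ p * q := by nlinarith
    have : (3:ℚ) ≤ (p:ℚ) * q := by exact_mod_cast h3
    linarith
  have hnum2 : (0:ℚ) < (p:ℚ) * q + 1 := by linarith
  have hub : (p:ℚ) * q + 1 < (p:ℚ)^2 := by
    have h4 : p * q + 1 < p * p := by nlinarith
    have : ((p * q + 1 : ℕ) : ℚ) < ((p * p : ℕ) : ℚ) := by exact_mod_cast h4
    push_cast at this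
    nlinarith [this]
  have hl1b1 : 0 < cf l1 := by rw [hc1]; positivity
  have hl1b2 : cf l1 < 1 := by
    rw [hc1, div_lt_one (by positivity)]; linarith
  have hl2b1 : 0 < cf l2 := by rw [hc2]; positivity
  have hl2b2 : cf l2 < 1 := by
    rw [hc2, div_lt_one (by positivity)]; linarith
  obtain ⟨tl1, hl1eq, hl1ne, hl1pos, hl1last, hl1cf⟩ := valid_head_zero l1 hl1 hl1b1 hl1b2
  obtain ⟨tl2, hl2eq, hl2ne, hl2pos, hl2last, hl2cf⟩ := valid_head_zero l2 hl2 hl2b1 hl2b2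
  rcases Nat.even_or_odd (m+1) with hev | hod
  · -- n even, m odd : l1 = 0 :: LA, l2 = 0 :: LB
    have hmodd : Odd m := by
      rcases hev with ⟨k, hk⟩; exact ⟨k - 1, by omega⟩
    have hmpow : ((-1:ℤ))^m = -1 := hmodd.neg_one_pow
    have h1 : cf tl1 = cf LA := by
      rw [hl1cf, hc1, hAcf, hA1, hC1, hmpow, inv_div]
      push_cast
      ring_nf
    have h2 : cf tl2 = cf LB := by
      rw [hl2cf, hc2, hBcf, hB1, hD1, hmpow, inv_div]
      push_cast
      ring_nf
    have ht1 : tl1 = LA := cf_inj_pos tl1 LA hl1pos hApos hl1ne hAne hl1last hAlast h1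
    have ht2 : tl2 = LB := cf_inj_pos tl2 LB hl2pos hBpos hl2ne hBne hl2last hBlast h2
    rw [hl1eq, hl2eq, ht1, ht2, hev.neg_one_pow]
    omega
  · -- n odd, m even : l1 = 0 :: LB, l2 = 0 :: LA
    have hmeven : Even m := by
      rcases hod with ⟨k, hk⟩; exact ⟨k, by omega⟩
    have hmpow : ((-1:ℤ))^m = 1 := hmeven.neg_one_pow
    have h1 : cf tl1 = cf LB := by
      rw [hl1cf, hc1, hBcf, hB1, hD1, hmpow, inv_div]
      push_cast
      ring_nf
    have h2 : cf tl2 = cf LA := by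
      rw [hl2cf, hc2, hAcf, hA1, hC1, hmpow, inv_div]
      push_cast
      ring_nf
    have ht1 : tl1 = LB := cf_inj_pos tl1 LB hl1pos hBpos hl1ne hBne hl1last hBlast h1
    have ht2 : tl2 = LA := cf_inj_pos tl2 LA hl2pos hApos hl2ne hAne hl2last hAlast h2
    rw [hl1eq, hl2eq, ht1, ht2, hod.neg_one_pow]
    omega
end
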